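/- arXiv:math/0510413 — 3 statements merged into one kernel-verified Lean document; each statement's English description precedes it below -/
import Mathlib

section
/- Let M be an immersed surface in ℝⁿ with n ≥ 4, let p ∈ M be a non-umbilic point, and let g denote the first fundamental form of M. Then there exist an affine plane E_p passing through the origin of N_pM and containing the curvature ellipse at p, and a vector c_p ∈ E_p such that c_p·α_p = g_p (i.e. ⟨c_p, α_p(X,Y)⟩ = ⟨X,Y⟩ for all X,Y ∈ T_pM), if and only if p is a semiumbilic point that is not a point of inflection. Moreover, if such a vector c_p exists, it is unique. -/
/- Local framework: an immersed surface in ℝⁿ is given by a smooth parametrization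
`ψ : Pl → Amb n` (`Pl = ℝ²` the parameter domain) whose differential is everywhere
injective.  Tangent/normal spaces, fundamental forms, connections, curvature ellipse,
(semi)umbilic and inflection points, flatness, etc. are defined from `ψ`. -/

noncomputable section
open scoped RealInnerProductSpace

/-- The parameter plane ℝ². -/
abbrev Pl := EuclideanSpace ℝ (Fin 2)
/-- Ambient Euclidean space ℝⁿ. -/
abbrev Amb (n : ℕ) := EuclideanSpace ℝ (Fin n)

/-- `ψ` is a smooth immersion. -/
def Immersion {n : ℕ} (ψ : Pl → Amb n) : Prop :=
  ContDiff ℝ (⊤ : ℕ∞) ψ ∧ ∀ q, Function.Injective (fderiv ℝ ψ q)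

/-- Tangent plane `T_pM` (as a linear subspace of the ambient space) at the point
with parameter `q`. -/
def Tang {n : ℕ} (ψ : Pl → Amb n) (q : Pl) : Submodule ℝ (Amb n) :=
  LinearMap.range (fderiv ℝ ψ q : Pl →ₗ[ℝ] Amb n)

/-- Normal space `N_pM = (T_pM)ᗮ`. -/
def Nor {n : ℕ} (ψ : Pl → Amb n) (q : Pl) : Submodule ℝ (Amb n) :=
  (Tang ψ q)ᗮ

/-- Tangential part `X ↦ X^⊤` of an ambient vector. -/
def tproj {n : ℕ} (ψ : Pl → Amb n) (q : Pl) (x : Amb n) : Amb n :=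
  (Submodule.orthogonalProjectionOnto (Tang ψ q) x : Amb n)

/-- Normal part `X ↦ X^⊥` of an ambient vector. -/
def nproj {n : ℕ} (ψ : Pl → Amb n) (q : Pl) (x : Amb n) : Amb n :=
  x - tproj ψ q x

/-- The second fundamental form `α` at the point of parameter `q`, evaluated on the
tangent vectors `dψ_q v`, `dψ_q w` (for parameter directions `v w : Pl`):
`α(dψ v, dψ w) = (D_{dψ v} (dψ w))^⊥ = (∂_v ∂_w ψ)^⊥`. -/
def sff {n : ℕ} (ψ : Pl → Amb n) (q : Pl) (v w : Pl) : Amb n :=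
  nproj ψ q (fderiv ℝ (fun x => fderiv ℝ ψ x w) q v)

/-- The curvature ellipse at `q`: image of `η(t) = α(t,t)` over the unit tangent
vectors `t = dψ_q v`. -/
def Ellipse {n : ℕ} (ψ : Pl → Amb n) (q : Pl) : Set (Amb n) :=
  {z | ∃ v : Pl, ‖fderiv ℝ ψ q v‖ = 1 ∧ z = sff ψ q v v}

/-- `q` is an umbilic point: the curvature ellipse degenerates to a point. -/
def Umbilic {n : ℕ} (ψ : Pl → Amb n) (q : Pl) : Prop :=
  ∃ a : Amb n, Ellipse ψ q = {a}

/-- `q` is a semiumbilic point: the curvature ellipse lies in an affine line. -/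
def Semiumbilic {n : ℕ} (ψ : Pl → Amb n) (q : Pl) : Prop :=
  ∃ a b : Amb n, Ellipse ψ q ⊆ {x | ∃ s : ℝ, x = a + s • b}

/-- `q` is a point of inflection: the curvature ellipse lies in a line through the
origin of the normal space. -/
def Inflection {n : ℕ} (ψ : Pl → Amb n) (q : Pl) : Prop :=
  ∃ b : Amb n, Ellipse ψ q ⊆ {x | ∃ s : ℝ, x = s • b}

/-- The surface is semiumbilical: every point is semiumbilic and not of inflection. -/
def Semiumbilical {n : ℕ} (ψ : Pl → Amb n) : Prop :=
  ∀ q, Semiumbilic ψ q ∧ ¬ Inflection ψ q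

/-- A smooth ambient-valued field which is everywhere tangent. -/
def TangentField {n : ℕ} (ψ : Pl → Amb n) (F : Pl → Amb n) : Prop :=
  ContDiff ℝ (⊤ : ℕ∞) F ∧ ∀ q, F q ∈ Tang ψ q

/-- A smooth ambient-valued field which is everywhere normal (a section of `NM`). -/
def NormalField {n : ℕ} (ψ : Pl → Amb n) (F : Pl → Amb n) : Prop :=
  ContDiff ℝ (⊤ : ℕ∞) F ∧ ∀ q, F q ∈ Nor ψ q

/-- The tangent covariant derivative `∇^⊤ F = (D F)^⊤` of an ambient field `F`
along the `i`-th coordinate direction of the parameter plane. -/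
def covT {n : ℕ} (ψ : Pl → Amb n) (F : Pl → Amb n) (i : Fin 2) (q : Pl) : Amb n :=
  tproj ψ q (fderiv ℝ F q (EuclideanSpace.single i (1:ℝ)))

/-- The tangent connection `∇^⊤` is flat: its curvature `R(∂₁,∂₂)` annihilates every
smooth tangent field (by tensoriality of the curvature this means `R = 0`, since the
coordinate fields `∂₁, ∂₂` commute and span). -/
def FlatSurface {n : ℕ} (ψ : Pl → Amb n) : Prop :=
  ∀ F : Pl → Amb n, TangentField ψ F →
    ∀ q, covT ψ (covT ψ F 1) 0 q = covT ψ (covT ψ F 0) 1 q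

/-- A tangent field is parallel: `∇^⊤ Y = (D Y)^⊤ = 0` in every tangent direction. -/
def ParallelT {n : ℕ} (ψ : Pl → Amb n) (F : Pl → Amb n) : Prop :=
  ∀ q (v : Pl), tproj ψ q (fderiv ℝ F q v) = 0

/-- A normal section is parallel: `∇^⊥ u = (D u)^⊥ = 0` in every tangent direction. -/
def ParallelN {n : ℕ} (ψ : Pl → Amb n) (F : Pl → Amb n) : Prop :=
  ∀ q (v : Pl), nproj ψ q (fderiv ℝ F q v) = 0

/-- `c · α = g`: the normal section `c` satisfies `⟨c, α(X,Y)⟩ = ⟨X,Y⟩` for all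
tangent vectors `X = dψ v`, `Y = dψ w`. -/
def CAG {n : ℕ} (ψ : Pl → Amb n) (c : Pl → Amb n) : Prop :=
  ∀ q (v w : Pl), (⟪c q, sff ψ q v w⟫) = ⟪fderiv ℝ ψ q v, fderiv ℝ ψ q w⟫

/-- `e` is a tangent field with `∇^⊤_X e = X` for every tangent vector `X = dψ v`. -/
def EulerField {n : ℕ} (ψ : Pl → Amb n) (e : Pl → Amb n) : Prop :=
  TangentField ψ e ∧ ∀ q (v : Pl), tproj ψ q (fderiv ℝ e q v) = fderiv ℝ ψ q v

/-- `j` is the tangent field `½ grad⟨c,c⟩` (gradient with respect to the first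
fundamental form): `⟨2 j, dψ v⟩ = d⟨c,c⟩(dψ v)` for every direction `v`. -/
def HalfGradCSq {n : ℕ} (ψ : Pl → Amb n) (c j : Pl → Amb n) : Prop :=
  TangentField ψ j ∧
    ∀ q (v : Pl), 2 * (⟪j q, fderiv ℝ ψ q v⟫) = fderiv ℝ (fun x => (⟪c x, c x⟫ : ℝ)) q v

/-- `k` is a normal section with `(D_X (e - k))^⊥ = 0` for all tangent `X`. -/
def KField {n : ℕ} (ψ : Pl → Amb n) (e k : Pl → Amb n) : Prop :=
  NormalField ψ k ∧ ∀ q (v : Pl), nproj ψ q (fderiv ℝ (fun x => e x - k x) q v) = 0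

/-- `dψ_q v` is a (unit) asymptotic direction at `q`: `η(t) = α(t,t)` is an endpoint
(extreme point) of the segment into which the curvature ellipse degenerates. -/
def IsAsymptotic {n : ℕ} (ψ : Pl → Amb n) (q : Pl) (v : Pl) : Prop :=
  ‖fderiv ℝ ψ q v‖ = 1 ∧ sff ψ q v v ∈ Set.extremePoints ℝ (Ellipse ψ q)


/-! In an orthonormal frame `t₁, t₂` of `T_pM`, with `H = (α₁₁ + α₂₂)/2`, `B = (α₁₁ - α₂₂)/2`
and `b = α₁₂`, the curvature ellipse is `H + cos 2θ B + sin 2θ b`, and `c · α = g` says exactly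
`⟨c, H⟩ = 1` and `c ⊥ B, b`. So a linear plane containing the ellipse contains `H, B, b`, and
`H ∉ span {B, b}`, whence `dim span {H, B, b} = dim span {B, b} + 1`. Away from umbilics,
`span {B, b} ≠ 0`, so such a plane exists iff `B, b` span a line (semiumbilic) while `H, B, b` do
not (no inflection). The plane is then `span {H, B, b}`, where `c` is forced to be the normalized
component of `H` orthogonal to `B, b`. -/

theorem exists_sq_sub_sq_eq_of_sq_add_sq_eq_one {x y : ℝ} (h : x ^ 2 + y ^ 2 = 1) :
    ∃ p r : ℝ, p ^ 2 + r ^ 2 = 1 ∧ p ^ 2 - r ^ 2 = x ∧ 2 * p * r = y := by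
  -- `p + r i` is a square root of `x + y i`
  obtain ⟨w, hw⟩ := IsAlgClosed.exists_pow_nat_eq (⟨x, y⟩ : ℂ) two_pos
  have hre : w.re ^ 2 - w.im ^ 2 = x := by
    simpa [sq] using congrArg Complex.re hw
  have him : 2 * w.re * w.im = y := by
    have := congrArg Complex.im hw
    simp only [sq, Complex.mul_im] at this
    linarith
  have hsq : (w.re ^ 2 + w.im ^ 2) ^ 2 = 1 := by
    rw [← h, ← hre, ← him]; ring
  refine ⟨w.re, w.im, ?_, hre, him⟩
  exact (pow_eq_one_iff_of_nonneg (by positivity) two_ne_zero).1 hsq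

section EllipseOf

variable {F : Type*} [AddCommGroup F] [Module ℝ F]

def ellipseOf (H B b : F) : Set F :=
  {z | ∃ x y : ℝ, x ^ 2 + y ^ 2 = 1 ∧ z = H + x • B + y • b}

variable {H B b : F}

theorem ellipseOf_subset_affineSubspace_iff (P : AffineSubspace ℝ F) :
    ellipseOf H B b ⊆ P ↔ H ∈ P ∧ B ∈ P.direction ∧ b ∈ P.direction := by
  constructor
  · intro hP
    have mem : ∀ x y : ℝ, x ^ 2 + y ^ 2 = 1 → H + x • B + y • b ∈ P :=
      fun x y hxy => hP ⟨x, y, hxy, rfl⟩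
    have hB : B ∈ P.direction := by
      have h := P.direction.smul_mem (1 / 2 : ℝ)
        (P.vsub_mem_direction (mem 1 0 (by norm_num)) (mem (-1) 0 (by norm_num)))
      convert h using 1
      rw [vsub_eq_sub]; module
    have hb : b ∈ P.direction := by
      have h := P.direction.smul_mem (1 / 2 : ℝ)
        (P.vsub_mem_direction (mem 0 1 (by norm_num)) (mem 0 (-1) (by norm_num)))
      convert h using 1
      rw [vsub_eq_sub]; module
    refine ⟨?_, hB, hb⟩
    have h := P.vadd_mem_of_mem_direction (P.direction.neg_mem hB) (mem 1 0 (by norm_num))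
    convert h using 1
    rw [vadd_eq_add]; module
  · rintro ⟨hH, hB, hb⟩ _ ⟨x, y, -, rfl⟩
    rw [SetLike.mem_coe, show H + x • B + y • b = (x • B + y • b) +ᵥ H by
      rw [vadd_eq_add]; abel]
    exact P.vadd_mem_of_mem_direction
      (P.direction.add_mem (P.direction.smul_mem x hB) (P.direction.smul_mem y hb)) hH

theorem ellipseOf_subset_submodule_iff (E : Submodule ℝ F) :
    ellipseOf H B b ⊆ E ↔ (ℝ ∙ B ⊔ ℝ ∙ b) ⊔ ℝ ∙ H ≤ E := by
  have h := ellipseOf_subset_affineSubspace_iff (H := H) (B := B) (b := b) E.toAffineSubspace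
  rw [Submodule.toAffineSubspace_direction] at h
  simp only [sup_le_iff, Submodule.span_singleton_le_iff_mem]
  exact h.trans (by tauto)

theorem exists_ellipseOf_subset_line_iff :
    (∃ a d : F, ellipseOf H B b ⊆ {x | ∃ s : ℝ, x = a + s • d}) ↔
      ∃ d : F, ℝ ∙ B ⊔ ℝ ∙ b ≤ ℝ ∙ d := by
  have hline : ∀ a d : F, {x | ∃ s : ℝ, x = a + s • d} = AffineSubspace.mk' a (ℝ ∙ d) := by
    intro a d
    ext x
    simp only [Set.mem_ofPred_eq, SetLike.mem_coe, AffineSubspace.mem_mk', vsub_eq_sub,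
      Submodule.mem_span_singleton, eq_sub_iff_add_eq, add_comm a, eq_comm]
  simp only [hline, ellipseOf_subset_affineSubspace_iff, AffineSubspace.direction_mk',
    sup_le_iff, Submodule.span_singleton_le_iff_mem]
  exact ⟨fun ⟨_, d, _, hd⟩ => ⟨d, hd⟩,
    fun ⟨d, hd⟩ => ⟨H, d, AffineSubspace.self_mem_mk' H _, hd⟩⟩

theorem exists_ellipseOf_subset_span_singleton_iff :
    (∃ d : F, ellipseOf H B b ⊆ {x | ∃ s : ℝ, x = s • d}) ↔
      ∃ d : F, (ℝ ∙ B ⊔ ℝ ∙ b) ⊔ ℝ ∙ H ≤ ℝ ∙ d := by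
  have hline : ∀ d : F, {x | ∃ s : ℝ, x = s • d} = ((ℝ ∙ d : Submodule ℝ F) : Set F) := by
    intro d
    ext x
    simp only [Set.mem_ofPred_eq, SetLike.mem_coe, Submodule.mem_span_singleton, eq_comm]
  simp only [hline, ellipseOf_subset_submodule_iff]

theorem ellipseOf_zero_zero (H : F) : ellipseOf H (0 : F) 0 = {H} := by
  ext z
  simp only [ellipseOf, smul_zero, add_zero, Set.mem_ofPred_eq, Set.mem_singleton_iff]
  exact ⟨fun ⟨_, _, _, hz⟩ => hz, fun hz => ⟨1, 0, by norm_num, hz⟩⟩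

end EllipseOf

theorem Submodule.exists_le_span_singleton_iff_finrank_le_one {K V : Type*} [DivisionRing K]
    [AddCommGroup V] [Module K V] (W : Submodule K V) [FiniteDimensional K W] :
    (∃ d : V, W ≤ K ∙ d) ↔ Module.finrank K W ≤ 1 := by
  constructor
  · rintro ⟨d, hd⟩
    exact (Submodule.finrank_mono hd).trans (by simpa using finrank_span_le_card ({d} : Set V))
  · intro h
    have := (W.finrank_le_one_iff_isPrincipal).1 h
    exact ⟨IsPrincipal.generator W, (IsPrincipal.span_singleton_generator W).ge⟩

section DualVector

variable {F : Type*} [NormedAddCommGroup F] [InnerProductSpace ℝ F]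
  {W E : Submodule ℝ F} {H c c' : F}

theorem notMem_of_mem_orthogonal_of_inner_eq_one (hcW : c ∈ Wᗮ) (hcH : ⟪c, H⟫ = 1) :
    H ∉ W := by
  intro hH
  rw [real_inner_comm, Submodule.inner_right_of_mem_orthogonal hH hcW] at hcH
  exact zero_ne_one hcH

theorem exists_mem_sup_inner_eq_one [W.HasOrthogonalProjection] (hH : H ∉ W) :
    ∃ c ∈ W ⊔ ℝ ∙ H, ⟪c, H⟫ = 1 ∧ c ∈ Wᗮ := by
  set h := H - W.starProjection H with hh
  have hperp : h ∈ Wᗮ := W.sub_starProjection_mem_orthogonal H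
  have hne : h ≠ 0 := fun h0 => hH (by
    rw [sub_eq_zero] at h0
    exact h0 ▸ W.starProjection_apply_mem H)
  have hinner : ⟪h, H⟫ = ‖h‖ ^ 2 := by
    rw [← real_inner_self_eq_norm_sq]
    nth_rw 1 [show H = h + W.starProjection H by rw [hh]; abel]
    rw [inner_add_right, real_inner_comm (W.starProjection H) h,
      Submodule.inner_right_of_mem_orthogonal (W.starProjection_apply_mem H) hperp, add_zero]
  refine ⟨(‖h‖ ^ 2)⁻¹ • h, ?_, ?_, Submodule.smul_mem _ _ hperp⟩
  · exact Submodule.smul_mem _ _ (Submodule.sub_mem _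
      (Submodule.mem_sup_right (Submodule.mem_span_singleton_self H))
      (Submodule.mem_sup_left (W.starProjection_apply_mem H)))
  · rw [real_inner_smul_left, hinner]
    exact inv_mul_cancel₀ (by positivity)

theorem eq_of_mem_sup_of_inner_eq (hc : c ∈ W ⊔ ℝ ∙ H) (hc' : c' ∈ W ⊔ ℝ ∙ H)
    (hcH : ⟪c, H⟫ = ⟪c', H⟫) (hcW : c ∈ Wᗮ) (hc'W : c' ∈ Wᗮ) : c = c' := by
  have hperp : c - c' ∈ (W ⊔ ℝ ∙ H)ᗮ := by
    rw [← Submodule.inf_orthogonal]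
    refine ⟨Submodule.sub_mem _ hcW hc'W, ?_⟩
    rw [SetLike.mem_coe, Submodule.mem_orthogonal_singleton_iff_inner_right, inner_sub_right,
      real_inner_comm, hcH, real_inner_comm, sub_self]
  have hmem : c - c' ∈ (W ⊔ ℝ ∙ H) ⊓ (W ⊔ ℝ ∙ H)ᗮ := ⟨Submodule.sub_mem _ hc hc', hperp⟩
  rw [Submodule.inf_orthogonal_eq_bot, Submodule.mem_bot, sub_eq_zero] at hmem
  exact hmem

variable [FiniteDimensional ℝ F]

theorem sup_span_singleton_eq_of_finrank_eq_two (hW : W ≠ ⊥) (hH : H ∉ W)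
    (hE : Module.finrank ℝ E = 2) (hWE : W ⊔ ℝ ∙ H ≤ E) : W ⊔ ℝ ∙ H = E := by
  refine Submodule.eq_of_le_of_finrank_le hWE ?_
  have hpos : Module.finrank ℝ W ≠ 0 := Submodule.finrank_eq_zero.not.mpr hW
  rw [hE, Submodule.finrank_sup_span_singleton hH]
  omega

theorem exists_plane_with_dual_vector_iff (hW : W ≠ ⊥) {N : Submodule ℝ F} (hN : W ⊔ ℝ ∙ H ≤ N) :
    (∃ E ≤ N, Module.finrank ℝ E = 2 ∧ W ⊔ ℝ ∙ H ≤ E ∧ ∃ c ∈ E, ⟪c, H⟫ = 1 ∧ c ∈ Wᗮ) ↔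
      Module.finrank ℝ W ≤ 1 ∧ ¬ Module.finrank ℝ ↥(W ⊔ ℝ ∙ H) ≤ 1 := by
  constructor
  · rintro ⟨E, -, hE, hWE, c, -, hcH, hcW⟩
    have hH := notMem_of_mem_orthogonal_of_inner_eq_one hcW hcH
    have hrank : Module.finrank ℝ ↥(W ⊔ ℝ ∙ H) = Module.finrank ℝ W + 1 :=
      Submodule.finrank_sup_span_singleton hH
    rw [sup_span_singleton_eq_of_finrank_eq_two hW hH hE hWE, hE] at hrank ⊢
    omega
  · rintro ⟨hW1, hK1⟩
    have hH : H ∉ W := fun hH => hK1 (by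
      rwa [sup_eq_left.2 ((Submodule.span_singleton_le_iff_mem H W).2 hH)])
    have hrank : Module.finrank ℝ ↥(W ⊔ ℝ ∙ H) = Module.finrank ℝ W + 1 :=
      Submodule.finrank_sup_span_singleton hH
    obtain ⟨c, hcK, hcH, hcW⟩ := exists_mem_sup_inner_eq_one hH
    have hK2 : Module.finrank ℝ ↥(W ⊔ ℝ ∙ H) = 2 := by omega
    exact ⟨W ⊔ ℝ ∙ H, hN, hK2, le_rfl, c, hcK, hcH, hcW⟩

end DualVector

section Frame

variable {V F G : Type*} [AddCommGroup V] [Module ℝ V]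
  [NormedAddCommGroup F] [InnerProductSpace ℝ F] [NormedAddCommGroup G] [InnerProductSpace ℝ G]

structure IsOrthonormalFrame (L : V →ₗ[ℝ] F) (v₁ v₂ : V) : Prop where
  inner_one_one : ⟪L v₁, L v₁⟫ = 1
  inner_two_two : ⟪L v₂, L v₂⟫ = 1
  inner_one_two : ⟪L v₁, L v₂⟫ = 0
  exists_eq : ∀ v, ∃ x y : ℝ, v = x • v₁ + y • v₂

theorem exists_isOrthonormalFrame [FiniteDimensional ℝ V] (hV : Module.finrank ℝ V = 2)
    {L : V →ₗ[ℝ] F} (hL : Function.Injective L) : ∃ v₁ v₂ : V, IsOrthonormalFrame L v₁ v₂ := by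
  set e := LinearEquiv.ofInjective L hL
  have hT : Module.finrank ℝ (LinearMap.range L) = 2 := (LinearMap.finrank_range_of_inj hL).trans hV
  set u := (stdOrthonormalBasis ℝ (LinearMap.range L)).reindex (finCongr hT)
  have hLu : ∀ i, L (e.symm (u i)) = u i := fun i => by
    rw [← LinearEquiv.ofInjective_apply L (h := hL), LinearEquiv.apply_symm_apply]
  have hu := orthonormal_iff_ite.1 u.orthonormal
  refine ⟨e.symm (u 0), e.symm (u 1), ⟨?_, ?_, ?_, fun v => ?_⟩⟩
  · simp only [hLu, ← Submodule.coe_inner, hu, if_pos]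
  · simp only [hLu, ← Submodule.coe_inner, hu, if_pos]
  · simp only [hLu, ← Submodule.coe_inner, hu]
    exact if_neg (by decide)
  refine ⟨u.repr (e v) 0, u.repr (e v) 1, e.injective ?_⟩
  simpa [Fin.sum_univ_two] using (u.sum_repr (e v)).symm

variable {L : V →ₗ[ℝ] F} {v₁ v₂ : V}

theorem IsOrthonormalFrame.inner_apply (hf : IsOrthonormalFrame L v₁ v₂) (x y x' y' : ℝ) :
    ⟪L (x • v₁ + y • v₂), L (x' • v₁ + y' • v₂)⟫ = x * x' + y * y' := by
  have h21 : ⟪L v₂, L v₁⟫ = 0 := by rw [real_inner_comm]; exact hf.inner_one_two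
  simp only [map_add, map_smul, inner_add_left, inner_add_right, real_inner_smul_left,
    real_inner_smul_right, hf.inner_one_one, hf.inner_two_two, hf.inner_one_two, h21]
  ring

theorem IsOrthonormalFrame.norm_apply_eq_one_iff (hf : IsOrthonormalFrame L v₁ v₂) (x y : ℝ) :
    ‖L (x • v₁ + y • v₂)‖ = 1 ↔ x ^ 2 + y ^ 2 = 1 := by
  rw [← pow_eq_one_iff_of_nonneg (norm_nonneg _) two_ne_zero, ← real_inner_self_eq_norm_sq,
    hf.inner_apply]
  ring_nf

theorem LinearMap.apply_add_smul_add_smul_of_symm (β : V →ₗ[ℝ] V →ₗ[ℝ] G)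
    (hβ : ∀ v w, β v w = β w v) (x y x' y' : ℝ) :
    β (x • v₁ + y • v₂) (x' • v₁ + y' • v₂) =
      (x * x') • β v₁ v₁ + (x * y' + y * x') • β v₁ v₂ + (y * y') • β v₂ v₂ := by
  simp only [map_add, map_smul, LinearMap.add_apply, LinearMap.smul_apply, hβ v₂ v₁]
  module

-- `cos θ v₁ + sin θ v₂` is sent to `H + cos 2θ B + sin 2θ b`.
theorem IsOrthonormalFrame.setOf_eq_ellipseOf (hf : IsOrthonormalFrame L v₁ v₂)
    (β : V →ₗ[ℝ] V →ₗ[ℝ] G) (hβ : ∀ v w, β v w = β w v) :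
    {z | ∃ v, ‖L v‖ = 1 ∧ z = β v v} =
      ellipseOf ((1 / 2 : ℝ) • (β v₁ v₁ + β v₂ v₂)) ((1 / 2 : ℝ) • (β v₁ v₁ - β v₂ v₂))
        (β v₁ v₂) := by
  have hdiag : ∀ p r : ℝ, p ^ 2 + r ^ 2 = 1 → β (p • v₁ + r • v₂) (p • v₁ + r • v₂) =
      (1 / 2 : ℝ) • (β v₁ v₁ + β v₂ v₂) + (p ^ 2 - r ^ 2) • ((1 / 2 : ℝ) • (β v₁ v₁ - β v₂ v₂)) +
        (2 * p * r) • β v₁ v₂ := by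
    intro p r hpr
    rw [β.apply_add_smul_add_smul_of_symm hβ]
    match_scalars
    · linear_combination (1 / 2 : ℝ) * hpr
    · ring
    · linear_combination (1 / 2 : ℝ) * hpr
  ext z
  constructor
  · rintro ⟨v, hv, rfl⟩
    obtain ⟨p, r, rfl⟩ := hf.exists_eq v
    have hpr := (hf.norm_apply_eq_one_iff p r).1 hv
    exact ⟨p ^ 2 - r ^ 2, 2 * p * r, by linear_combination (p ^ 2 + r ^ 2 + 1) * hpr,
      hdiag p r hpr⟩
  · rintro ⟨x, y, hxy, rfl⟩
    obtain ⟨p, r, hpr, rfl, rfl⟩ := exists_sq_sub_sq_eq_of_sq_add_sq_eq_one hxy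
    exact ⟨p • v₁ + r • v₂, (hf.norm_apply_eq_one_iff p r).2 hpr, (hdiag p r hpr).symm⟩

theorem IsOrthonormalFrame.inner_apply_eq_inner_iff (hf : IsOrthonormalFrame L v₁ v₂)
    (β : V →ₗ[ℝ] V →ₗ[ℝ] G) (hβ : ∀ v w, β v w = β w v) (c : G) :
    (∀ v w, ⟪c, β v w⟫ = ⟪L v, L w⟫) ↔
      ⟪c, (1 / 2 : ℝ) • (β v₁ v₁ + β v₂ v₂)⟫ = 1 ∧
        c ∈ (ℝ ∙ (1 / 2 : ℝ) • (β v₁ v₁ - β v₂ v₂) ⊔ ℝ ∙ β v₁ v₂)ᗮ := by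
  rw [← Submodule.inf_orthogonal, Submodule.mem_inf,
    Submodule.mem_orthogonal_singleton_iff_inner_right,
    Submodule.mem_orthogonal_singleton_iff_inner_right, real_inner_comm c, real_inner_comm c]
  simp only [real_inner_smul_right, inner_add_right, inner_sub_right]
  constructor
  · intro h
    have h11 := (h v₁ v₁).trans hf.inner_one_one
    have h22 := (h v₂ v₂).trans hf.inner_two_two
    refine ⟨by linarith, by linarith, (h v₁ v₂).trans hf.inner_one_two⟩
  · rintro ⟨hH, hB, hb⟩ v w
    obtain ⟨x, y, rfl⟩ := hf.exists_eq v
    obtain ⟨x', y', rfl⟩ := hf.exists_eq w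
    have h11 : ⟪c, β v₁ v₁⟫ = 1 := by linarith
    have h22 : ⟪c, β v₂ v₂⟫ = 1 := by linarith
    rw [β.apply_add_smul_add_smul_of_symm hβ, hf.inner_apply]
    simp only [inner_add_right, real_inner_smul_right, h11, h22, hb]
    ring

end Frame

section Surface

variable {n : ℕ} {ψ : Pl → Amb n}

def sffBilin (ψ : Pl → Amb n) (q : Pl) : Pl →ₗ[ℝ] Pl →ₗ[ℝ] Amb n :=
  (fderiv ℝ (fderiv ℝ ψ) q).toLinearMap₁₂.compr₂ (Nor ψ q).starProjection.toLinearMap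

theorem sffBilin_apply (q v w : Pl) :
    sffBilin ψ q v w = (Nor ψ q).starProjection (fderiv ℝ (fderiv ℝ ψ) q v w) := rfl

theorem sff_eq_sffBilin (hψ : ContDiff ℝ 2 ψ) (q v w : Pl) :
    sff ψ q v w = sffBilin ψ q v w := by
  have hd : DifferentiableAt ℝ (fderiv ℝ ψ) q :=
    ((hψ.fderiv_right (m := 1) (by norm_num)).differentiable one_ne_zero).differentiableAt
  rw [sffBilin_apply, sff, fderiv_clm_apply hd (differentiableAt_const w), fderiv_fun_const,
    Pi.zero_apply, ContinuousLinearMap.comp_zero, zero_add, nproj, tproj, Nor,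
    Submodule.starProjection_orthogonal]
  rfl

theorem sffBilin_symm (hψ : ContDiff ℝ 2 ψ) (q v w : Pl) :
    sffBilin ψ q v w = sffBilin ψ q w v := by
  have hd : DifferentiableAt ℝ (fderiv ℝ ψ) q :=
    ((hψ.fderiv_right (m := 1) (by norm_num)).differentiable one_ne_zero).differentiableAt
  have hψd : ∀ y, HasFDerivAt ψ (fderiv ℝ ψ y) y := fun y =>
    ((hψ.differentiable (by norm_num)) y).hasFDerivAt
  rw [sffBilin_apply, sffBilin_apply, second_derivative_symmetric hψd hd.hasFDerivAt v w]

theorem ellipse_subset_nor (q : Pl) : Ellipse ψ q ⊆ Nor ψ q := by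
  rintro _ ⟨v, -, rfl⟩
  exact (Tang ψ q).sub_starProjection_mem_orthogonal _

end Surface

theorem statement_0_general {n : ℕ} (ψ : Pl → Amb n) (hψ : Immersion ψ)
    (q : Pl) (hq : ¬ Umbilic ψ q) :
    ((∃ E : Submodule ℝ (Amb n), E ≤ Nor ψ q ∧ Module.finrank ℝ E = 2 ∧
        Ellipse ψ q ⊆ (E : Set (Amb n)) ∧
        ∃ c ∈ E, ∀ v w : Pl, ⟪c, sff ψ q v w⟫ = ⟪fderiv ℝ ψ q v, fderiv ℝ ψ q w⟫) ↔
      (Semiumbilic ψ q ∧ ¬ Inflection ψ q)) ∧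
    ∀ c c' : Amb n,
      (∃ E : Submodule ℝ (Amb n), E ≤ Nor ψ q ∧ Module.finrank ℝ E = 2 ∧
        Ellipse ψ q ⊆ (E : Set (Amb n)) ∧ c ∈ E ∧
        ∀ v w : Pl, ⟪c, sff ψ q v w⟫ = ⟪fderiv ℝ ψ q v, fderiv ℝ ψ q w⟫) →
      (∃ E' : Submodule ℝ (Amb n), E' ≤ Nor ψ q ∧ Module.finrank ℝ E' = 2 ∧
        Ellipse ψ q ⊆ (E' : Set (Amb n)) ∧ c' ∈ E' ∧
        ∀ v w : Pl, ⟪c', sff ψ q v w⟫ = ⟪fderiv ℝ ψ q v, fderiv ℝ ψ q w⟫) →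
      c = c' := by
  have hψ2 : ContDiff ℝ 2 ψ := hψ.1.of_le (WithTop.coe_le_coe.2 le_top)
  set L : Pl →ₗ[ℝ] Amb n := (fderiv ℝ ψ q).toLinearMap
  obtain ⟨v₁, v₂, hf⟩ := exists_isOrthonormalFrame (L := L) finrank_euclideanSpace_fin (hψ.2 q)
  set β := sffBilin ψ q
  have hsff : sff ψ q = fun v w => β v w := funext₂ (sff_eq_sffBilin hψ2 q)
  set H := (1 / 2 : ℝ) • (β v₁ v₁ + β v₂ v₂)
  set B := (1 / 2 : ℝ) • (β v₁ v₁ - β v₂ v₂)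
  set b := β v₁ v₂
  set W := ℝ ∙ B ⊔ ℝ ∙ b
  have hEll : Ellipse ψ q = ellipseOf H B b := by
    rw [← hf.setOf_eq_ellipseOf β (sffBilin_symm hψ2 q), Ellipse, hsff]; rfl
  have hcag : ∀ c, (∀ v w, ⟪c, sff ψ q v w⟫ = ⟪fderiv ℝ ψ q v, fderiv ℝ ψ q w⟫) ↔
      ⟪c, H⟫ = 1 ∧ c ∈ Wᗮ := by
    rw [hsff]; exact hf.inner_apply_eq_inner_iff β (sffBilin_symm hψ2 q)
  have hsub : ∀ E : Submodule ℝ (Amb n), Ellipse ψ q ⊆ E ↔ W ⊔ ℝ ∙ H ≤ E := by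
    rw [hEll]; exact ellipseOf_subset_submodule_iff
  have hW : W ≠ ⊥ := by
    intro hW
    obtain ⟨hB, hb⟩ : B = 0 ∧ b = 0 := by simpa [W, sup_eq_bot_iff] using hW
    exact hq ⟨H, by rw [hEll, hB, hb, ellipseOf_zero_zero]⟩
  have hN : W ⊔ ℝ ∙ H ≤ Nor ψ q := (hsub _).1 (ellipse_subset_nor q)
  refine ⟨?_, ?_⟩
  · simp only [hcag, Semiumbilic, Inflection, hEll, ellipseOf_subset_submodule_iff,
      exists_ellipseOf_subset_line_iff, exists_ellipseOf_subset_span_singleton_iff,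
      Submodule.exists_le_span_singleton_iff_finrank_le_one]
    exact exists_plane_with_dual_vector_iff hW hN
  · rintro c c' ⟨E, -, hE, hEsub, hcE, hc⟩ ⟨E', -, hE', hE'sub, hc'E, hc'⟩
    rw [hsub] at hEsub hE'sub
    rw [hcag] at hc hc'
    have hH := notMem_of_mem_orthogonal_of_inner_eq_one hc.2 hc.1
    rw [← sup_span_singleton_eq_of_finrank_eq_two hW hH hE hEsub] at hcE
    rw [← sup_span_singleton_eq_of_finrank_eq_two hW hH hE' hE'sub] at hc'E
    exact eq_of_mem_sup_of_inner_eq hcE hc'E (hc.1.trans hc'.1.symm) hc.2 hc'.2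

/-- Let `M` be an immersed surface in ℝⁿ, `n ≥ 4`, and `p` a non-umbilic
point.  There exist an affine plane `E_p` through the origin of `N_pM` containing the
curvature ellipse at `p` and a vector `c_p ∈ E_p` with `c_p·α_p = g_p` iff `p` is a
semiumbilic point which is not a point of inflection; moreover such a `c_p` is unique. -/
theorem statement_0 {n : ℕ} (hn : 4 ≤ n) (ψ : Pl → Amb n) (hψ : Immersion ψ)
    (q : Pl) (hq : ¬ Umbilic ψ q) :
    ((∃ E : Submodule ℝ (Amb n), E ≤ Nor ψ q ∧ Module.finrank ℝ E = 2 ∧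
        Ellipse ψ q ⊆ (E : Set (Amb n)) ∧
        ∃ c ∈ E, ∀ v w : Pl, ⟪c, sff ψ q v w⟫ = ⟪fderiv ℝ ψ q v, fderiv ℝ ψ q w⟫) ↔
      (Semiumbilic ψ q ∧ ¬ Inflection ψ q)) ∧
    ∀ c c' : Amb n,
      (∃ E : Submodule ℝ (Amb n), E ≤ Nor ψ q ∧ Module.finrank ℝ E = 2 ∧
        Ellipse ψ q ⊆ (E : Set (Amb n)) ∧ c ∈ E ∧
        ∀ v w : Pl, ⟪c, sff ψ q v w⟫ = ⟪fderiv ℝ ψ q v, fderiv ℝ ψ q w⟫) →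
      (∃ E' : Submodule ℝ (Amb n), E' ≤ Nor ψ q ∧ Module.finrank ℝ E' = 2 ∧
        Ellipse ψ q ⊆ (E' : Set (Amb n)) ∧ c' ∈ E' ∧
        ∀ v w : Pl, ⟪c', sff ψ q v w⟫ = ⟪fderiv ℝ ψ q v, fderiv ℝ ψ q w⟫) →
      c = c' :=
  statement_0_general ψ hψ q hq
end
end

section
/- Let U and V be two surfaces immersed in ℝⁿ and let f : U → V be a diffeomorphism such that for every p ∈ U one has T_pU = T_qV, where q = f(p). Then: a section Y of TU is parallel if and only if Ỹ = Y∘f⁻¹, which is a section of TV, is parallel; and a section u of NU is parallel if and only if u∘f⁻¹, which is a section of NV, is parallel. -/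
/- Local framework: an immersed surface in ℝⁿ is given by a smooth parametrization
`ψ : Pl → Amb n` (`Pl = ℝ²` the parameter domain) whose differential is everywhere
injective.  Tangent/normal spaces, fundamental forms, connections, curvature ellipse,
(semi)umbilic and inflection points, flatness, etc. are defined from `ψ`. -/

noncomputable section
open scoped RealInnerProductSpace

theorem tproj_eq_of_tang_eq {n : ℕ} {ψ χ : Pl → Amb n} {q : Pl} (h : Tang ψ q = Tang χ q) :
    tproj ψ q = tproj χ q := by
  funext x
  exact congrArg (fun K : Submodule ℝ (Amb n) ↦ (K.orthogonalProjectionOnto x : Amb n)) h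

theorem nproj_eq_of_tang_eq {n : ℕ} {ψ χ : Pl → Amb n} {q : Pl} (h : Tang ψ q = Tang χ q) :
    nproj ψ q = nproj χ q := by
  funext x
  simp only [nproj, tproj_eq_of_tang_eq h]

theorem parallelT_iff_of_tang_eq {n : ℕ} {ψ χ : Pl → Amb n} (h : ∀ q, Tang ψ q = Tang χ q)
    (F : Pl → Amb n) : ParallelT ψ F ↔ ParallelT χ F := by
  simp only [ParallelT, tproj_eq_of_tang_eq (h _)]

theorem parallelN_iff_of_tang_eq {n : ℕ} {ψ χ : Pl → Amb n} (h : ∀ q, Tang ψ q = Tang χ q)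
    (F : Pl → Amb n) : ParallelN ψ F ↔ ParallelN χ F := by
  simp only [ParallelN, nproj_eq_of_tang_eq (h _)]

/-- `V` is parametrized by `χ = f ∘ ψ`, so `f` is the identity in parameters and a field `Y`
on `U` and `Y ∘ f⁻¹` on `V` are the same map `Pl → Amb n`. -/
theorem statement_5_general {n : ℕ} (ψ χ : Pl → Amb n)
    (hTT : ∀ q, Tang ψ q = Tang χ q) :
    (∀ Y : Pl → Amb n, TangentField ψ Y → (ParallelT ψ Y ↔ ParallelT χ Y)) ∧
    (∀ u : Pl → Amb n, NormalField ψ u → (ParallelN ψ u ↔ ParallelN χ u)) :=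
  ⟨fun Y _ => parallelT_iff_of_tang_eq hTT Y, fun u _ => parallelN_iff_of_tang_eq hTT u⟩

/-- Let `U, V` be surfaces in ℝⁿ and `f : U → V` a diffeomorphism with
`T_pU = T_{f(p)}V` for all `p` (here `V` is parametrized by `χ`, the composition of `f`
with the parametrization `ψ` of `U`, so that `f` is the identity in parameters).
A section `Y` of `TU` is parallel iff `Y∘f⁻¹`, a section of `TV`, is parallel; and a
section `u` of `NU` is parallel iff `u∘f⁻¹`, a section of `NV`, is parallel. -/
theorem statement_5 {n : ℕ} (ψ χ : Pl → Amb n) (hψ : Immersion ψ) (hχ : Immersion χ)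
    (hTT : ∀ q, Tang ψ q = Tang χ q) :
    (∀ Y : Pl → Amb n, TangentField ψ Y → (ParallelT ψ Y ↔ ParallelT χ Y)) ∧
    (∀ u : Pl → Amb n, NormalField ψ u → (ParallelN ψ u ↔ ParallelN χ u)) :=
  statement_5_general ψ χ hTT
end
end

section
/- Let M be a flat semiumbilical surface in ℝ⁴, let c be the normal section with c·α = g, let e be a tangent field with ∇^⊤_X e = X for all tangent fields X, let t ∈ ℝ, and assume f = id + tc − (1−t)e : M → ℝ⁴ is an immersion with local inverse φ, so that f(M) is a surface with T_{f(p)}f(M) = N_pM and N_{f(p)}f(M) = T_pM. Let α̃ denote the second fundamental form of f(M). Then for every p ∈ M with q = f(p), for X_p ∈ N_q f(M) = T_pM, u_p, v_p ∈ T_q f(M) = N_pM and Y_p ∈ T_pM, one has ⟨X_p, α̃(u_p, v_p)⟩ = −⟨v_p, α(X_p, dφ(u_p))⟩ and ⟨X_p, α̃(df(Y_p), v_p)⟩ = −⟨v_p, α(X_p, Y_p)⟩. -/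
/- Local framework: an immersed surface in ℝⁿ is given by a smooth parametrization
`ψ : Pl → Amb n` (`Pl = ℝ²` the parameter domain) whose differential is everywhere
injective.  Tangent/normal spaces, fundamental forms, connections, curvature ellipse,
(semi)umbilic and inflection points, flatness, etc. are defined from `ψ`. -/

noncomputable section
open scoped RealInnerProductSpace

/-! With `f = ψ + t c - (1 - t) e`, the identities `⟨dψ a, Dc u⟩ = -⟨dψ u, dψ a⟩`
(differentiate `⟨dψ a, c⟩ = 0` and use `c · α = g`) and `⟨dψ a, De u⟩ = ⟨dψ a, dψ u⟩`
cancel in `⟨dψ a, df u⟩`, so the tangent planes of `ψ` and `f` are orthogonal at every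
parameter. Differentiating `⟨dψ X, df v⟩ = 0` along `u` and using the symmetry of `D²ψ`
gives the identity: the normal projections in both second fundamental forms can be dropped,
since each is paired with a vector of the other tangent plane. -/

section Calculus

variable {E F : Type*} [NormedAddCommGroup E] [NormedSpace ℝ E]

lemma differentiable_fderiv_apply [NormedAddCommGroup F] [NormedSpace ℝ F] {G : E → F}
    (hG : ContDiff ℝ 2 G) (v : E) : Differentiable ℝ (fun x => fderiv ℝ G x v) :=
  fun x => ((hG.fderiv_right (m := 1) (by norm_num)).differentiable one_ne_zero x).clm_apply
    (differentiableAt_const v)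

lemma fderiv_fderiv_apply_comm [NormedAddCommGroup F] [NormedSpace ℝ F] {G : E → F}
    (hG : ContDiff ℝ 2 G) (x v u : E) :
    fderiv ℝ (fun y => fderiv ℝ G y v) x u = fderiv ℝ (fun y => fderiv ℝ G y u) x v := by
  have hD : DifferentiableAt ℝ (fderiv ℝ G) x :=
    (hG.fderiv_right (m := 1) (by norm_num)).differentiable one_ne_zero x
  rw [fderiv_clm_apply hD (differentiableAt_const v),
    fderiv_clm_apply hD (differentiableAt_const u)]
  simpa using (hG.contDiffAt.isSymmSndFDerivAt (by simp)) u v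

lemma inner_fderiv_add_inner_fderiv_eq_zero [NormedAddCommGroup F] [InnerProductSpace ℝ F]
    {G H : E → F} {x : E} (hG : DifferentiableAt ℝ G x) (hH : DifferentiableAt ℝ H x)
    (horth : ∀ y, ⟪G y, H y⟫ = 0) (u : E) :
    ⟪G x, fderiv ℝ H x u⟫ + ⟪fderiv ℝ G x u, H x⟫ = 0 := by
  rw [← fderiv_inner_apply ℝ hG hH, funext horth]
  simp

end Calculus

section Surface

variable {n : ℕ}

lemma fderiv_apply_mem_tang (ψ : Pl → Amb n) (q v : Pl) : fderiv ℝ ψ q v ∈ Tang ψ q :=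
  LinearMap.mem_range_self _ v

lemma inner_tproj_of_mem_tang {ψ : Pl → Amb n} {q : Pl} {y : Amb n} (hy : y ∈ Tang ψ q)
    (z : Amb n) : ⟪y, tproj ψ q z⟫ = ⟪y, z⟫ :=
  Submodule.inner_orthogonalProjectionOnto_eq_of_mem_left ⟨y, hy⟩ z

lemma inner_nproj_of_mem_nor {ψ : Pl → Amb n} {q : Pl} {y : Amb n} (hy : y ∈ Nor ψ q)
    (z : Amb n) : ⟪y, nproj ψ q z⟫ = ⟪y, z⟫ := by
  rw [nproj, inner_sub_right, tproj,
    Submodule.inner_left_of_mem_orthogonal (SetLike.coe_mem _) hy, sub_zero]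

theorem inner_sff_eq_neg_of_isOrtho {ψ f : Pl → Amb n} (hψ : ContDiff ℝ 2 ψ)
    (hf : ContDiff ℝ 2 f) (horth : ∀ x, Tang ψ x ⟂ Tang f x) (q vX w w' : Pl) :
    ⟪fderiv ℝ ψ q vX, sff f q w w'⟫ = -⟪fderiv ℝ f q w', sff ψ q vX w⟫ := by
  have hX : fderiv ℝ ψ q vX ∈ Nor f q := (horth q).le (fderiv_apply_mem_tang ψ q vX)
  have hY : fderiv ℝ f q w' ∈ Nor ψ q := (horth q).ge (fderiv_apply_mem_tang f q w')
  have hD := inner_fderiv_add_inner_fderiv_eq_zero (differentiable_fderiv_apply hψ vX q)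
    (differentiable_fderiv_apply hf w' q)
    (fun x => Submodule.isOrtho_iff_inner_eq.1 (horth x) _ (fderiv_apply_mem_tang ψ x vX) _
      (fderiv_apply_mem_tang f x w')) w
  rw [fderiv_fderiv_apply_comm hψ q vX w, real_inner_comm (fderiv ℝ f q w')] at hD
  rw [sff, sff, inner_nproj_of_mem_nor hX, inner_nproj_of_mem_nor hY]
  linarith

lemma inner_fderiv_of_cag {ψ c : Pl → Amb n} (hψ : ContDiff ℝ 2 ψ) (hc : NormalField ψ c)
    (hcg : CAG ψ c) (x a u : Pl) :
    ⟪fderiv ℝ ψ x a, fderiv ℝ c x u⟫ = -⟪fderiv ℝ ψ x u, fderiv ℝ ψ x a⟫ := by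
  have hD := inner_fderiv_add_inner_fderiv_eq_zero (differentiable_fderiv_apply hψ a x)
    (hc.1.differentiable (by simp) x)
    (fun y => Submodule.inner_right_of_mem_orthogonal (fderiv_apply_mem_tang ψ y a) (hc.2 y)) u
  have hα : ⟪fderiv ℝ (fun y => fderiv ℝ ψ y a) x u, c x⟫
      = ⟪fderiv ℝ ψ x u, fderiv ℝ ψ x a⟫ := by
    rw [real_inner_comm, ← inner_nproj_of_mem_nor (hc.2 x), ← sff, hcg]
  linarith

lemma inner_fderiv_of_eulerField {ψ e : Pl → Amb n} (he : EulerField ψ e) (x a u : Pl) :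
    ⟪fderiv ℝ ψ x a, fderiv ℝ e x u⟫ = ⟪fderiv ℝ ψ x a, fderiv ℝ ψ x u⟫ := by
  rw [← inner_tproj_of_mem_tang (fderiv_apply_mem_tang ψ x a), he.2 x u]

theorem tang_isOrtho_tang_of_cag {ψ c e : Pl → Amb n} (hψ : ContDiff ℝ 2 ψ)
    (hc : NormalField ψ c) (hcg : CAG ψ c) (he : EulerField ψ e) (t : ℝ) (x : Pl) :
    Tang ψ x ⟂ Tang (fun y => ψ y + t • c y - (1 - t) • e y) x := by
  have hdf : fderiv ℝ (fun y => ψ y + t • c y - (1 - t) • e y) x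
      = fderiv ℝ ψ x + t • fderiv ℝ c x - (1 - t) • fderiv ℝ e x :=
    (((hψ.differentiable two_ne_zero x).hasFDerivAt.add
      ((hc.1.differentiable (by simp) x).hasFDerivAt.const_smul t)).sub
      ((he.1.1.differentiable (by simp) x).hasFDerivAt.const_smul (1 - t))).fderiv
  rw [Submodule.isOrtho_iff_inner_eq]
  rintro _ ⟨a, rfl⟩ _ ⟨u, rfl⟩
  simp only [ContinuousLinearMap.coe_coe, hdf, sub_apply, add_apply, smul_apply,
    inner_sub_right, inner_add_right, inner_smul_right, inner_fderiv_of_cag hψ hc hcg,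
    inner_fderiv_of_eulerField he, real_inner_comm (fderiv ℝ ψ x u)]
  ring

end Surface

theorem statement_17_general (ψ : Pl → Amb 4) (hψ : Immersion ψ)
    (c : Pl → Amb 4) (hc : NormalField ψ c) (hcg : CAG ψ c)
    (e : Pl → Amb 4) (he : EulerField ψ e)
    (t : ℝ)
    (f : Pl → Amb 4) (hf : f = fun x => ψ x + t • c x - (1 - t) • e x) :
    ∀ (q : Pl) (vX w w' : Pl),
      (⟪fderiv ℝ ψ q vX, sff f q w w'⟫ : ℝ)
        = -(⟪fderiv ℝ f q w', sff ψ q vX w⟫ : ℝ) := by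
  subst hf
  have hψ2 : ContDiff ℝ 2 ψ := hψ.1.of_le (by norm_cast)
  have hc2 : ContDiff ℝ 2 c := hc.1.of_le (by norm_cast)
  have he2 : ContDiff ℝ 2 e := he.1.1.of_le (by norm_cast)
  exact inner_sff_eq_neg_of_isOrtho hψ2
    ((hψ2.add (hc2.const_smul t)).sub (he2.const_smul (1 - t)))
    (tang_isOrtho_tang_of_cag hψ2 hc hcg he t)

/-- With `f = id + t·c - (1-t)·e` an immersion as in Theorem 5.2, whose
image is parametrized by `f` itself (so that the local inverse `φ` of `f` is the
identity in parameters and `dφ(df(dψ w)) = dψ w`), the second fundamental form `α̃` of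
`f(M)` satisfies, for tangent vectors `X = dψ vX ∈ N_q f(M)`, `u = df(dψ w)`,
`v = df(dψ w') ∈ T_q f(M)`:
`⟨X, α̃(u, v)⟩ = -⟨v, α(X, dφ(u))⟩`, i.e. `⟨X, α̃(df Y, v)⟩ = -⟨v, α(X, Y)⟩`. -/
theorem statement_17 (ψ : Pl → Amb 4) (hψ : Immersion ψ)
    (hflat : FlatSurface ψ) (hsem : Semiumbilical ψ)
    (c : Pl → Amb 4) (hc : NormalField ψ c) (hcg : CAG ψ c)
    (e : Pl → Amb 4) (he : EulerField ψ e)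
    (t : ℝ)
    (f : Pl → Amb 4) (hf : f = fun x => ψ x + t • c x - (1 - t) • e x)
    (himm : ∀ q, Function.Injective (fderiv ℝ f q)) :
    ∀ (q : Pl) (vX w w' : Pl),
      (⟪fderiv ℝ ψ q vX, sff f q w w'⟫ : ℝ)
        = -(⟪fderiv ℝ f q w', sff ψ q vX w⟫ : ℝ) :=
  statement_17_general ψ hψ c hc hcg e he t f hf
end
end
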